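/- arXiv:1705.10776 — 7 statements merged into one kernel-verified Lean document; each statement's English description precedes it below -/
import Mathlib

section
/- Let n, j be positive integers and l a natural number with j·l ≤ n. Then the sum, over all finitely supported functions w : ℕ → ℕ satisfying Σ_k k·w(k) = n and w(j) = l, of the products ∏_{k≥1} 1/(k^{w(k)}·w(k)!), equals (1/(j^l·l!))·Σ_{k=0}^{⌊(n−j·l)/j⌋} (−1)^k/(j^k·k!) (an identity of rational numbers). -/
/-!
Write `R(j, l, n)` for the sum of `∏ 1/(k^{w k} (w k)!)` over the partitions `w` of `n` with
exactly `l` parts equal to `j`, and `P(n) = ∑_l R(j, l, n)` for the sum over all partitions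
of `n`. Removing the parts equal to `j` gives `R(j, l, n) = R(j, 0, n - jl)/(j^l l!)`. The same splitting
yields `n·P(n) = ∑_{k=1}^n P(n-k)`, hence Cauchy's formula `P(n) = 1` by strong induction, and so
`∑_l R(j, 0, m - jl)/(j^l l!) = 1` for every `m`: a convolution with the coefficients of
`exp(t/j)`, undone by convolving with those of `exp(-t/j)`.
-/

open scoped Nat

open Finset

lemma add_pow_div_factorial {K : Type*} [Field K] [CharZero K] (x y : K) (s : ℕ) :
    (x + y) ^ s / s ! = ∑ i ∈ range (s + 1), x ^ i / i ! * (y ^ (s - i) / (s - i)!) := by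
  have h := congrArg (PowerSeries.coeff s) (PowerSeries.exp_mul_exp_eq_exp_add x y)
  simp only [PowerSeries.coeff_mul, PowerSeries.coeff_rescale, PowerSeries.coeff_exp,
    Nat.sum_antidiagonal_eq_sum_range_succ
      fun i k => x ^ i * algebraMap ℚ K (1 / i !) * (y ^ k * algebraMap ℚ K (1 / k !))] at h
  simpa [div_eq_mul_inv] using h.symm

lemma sum_range_neg_one_pow_div_mul_one_div_eq_zero_pow {j : ℕ} (hj : 0 < j) (s : ℕ) :
    ∑ i ∈ range (s + 1), (-1 : ℚ) ^ i / ((j : ℚ) ^ i * (i ! : ℚ))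
      * (1 / ((j : ℚ) ^ (s - i) * ((s - i)! : ℚ))) = 0 ^ s := by
  have h := add_pow_div_factorial (-1 / (j : ℚ)) (1 / j) s
  rw [← add_div, neg_add_cancel, zero_div] at h
  convert h.symm using 1
  · refine sum_congr rfl fun i _ => ?_
    rw [div_pow, div_pow, one_pow]
    field_simp
  · cases s <;> simp

lemma eq_sum_range_of_sum_range_mul_eq_one {R : Type*} [CommSemiring R] {j : ℕ}
    {a b q : ℕ → R}
    (hab : ∀ s, ∑ i ∈ range (s + 1), b i * a (s - i) = 0 ^ s)
    (hq : ∀ m, ∑ l ∈ range (m / j + 1), a l * q (m - j * l) = 1) (m : ℕ) :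
    q m = ∑ k ∈ range (m / j + 1), b k := by
  set L := m / j with hL
  symm
  calc ∑ k ∈ range (L + 1), b k
      = ∑ k ∈ range (L + 1), ∑ l ∈ range (L + 1 - k), b k * a l * q (m - j * (k + l)) := by
        refine sum_congr rfl fun k hk => ?_
        have h := hq (m - j * k)
        have hkL := mem_range_succ_iff.mp hk
        rw [Nat.sub_mul_div, ← hL, show L - k + 1 = L + 1 - k by omega] at h
        simp only [Nat.sub_sub, ← mul_add] at h
        simp only [mul_assoc, ← mul_sum, h, mul_one]
    _ = ∑ s ∈ range (L + 1),
          ∑ k ∈ range (s + 1), b k * a (s - k) * q (m - j * (k + (s - k))) :=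
        (sum_range_diag_flip (L + 1) fun k l => b k * a l * q (m - j * (k + l))).symm
    _ = ∑ s ∈ range (L + 1), 0 ^ s * q (m - j * s) := by
        refine sum_congr rfl fun s _ => ?_
        rw [← hab s, sum_mul]
        exact sum_congr rfl fun k hk => by rw [Nat.add_sub_cancel' (mem_range_succ_iff.mp hk)]
    _ = q m := by simp [sum_range_succ']

namespace PartitionWeight

def size (w : ℕ →₀ ℕ) : ℕ := w.sum fun k m => k * m

lemma size_eq_sum_toMultiset (w : ℕ →₀ ℕ) : size w = (Finsupp.toMultiset w).sum := by
  simp only [size, Finsupp.sum_toMultiset, smul_eq_mul, mul_comm]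

noncomputable def partitions (n : ℕ) : Finset (ℕ →₀ ℕ) :=
  univ.image fun p : n.Partition => Multiset.toFinsupp p.parts

lemma mem_partitions {n : ℕ} {w : ℕ →₀ ℕ} :
    w ∈ partitions n ↔ w 0 = 0 ∧ size w = n := by
  constructor
  · rintro hw
    obtain ⟨p, -, rfl⟩ := mem_image.mp hw
    refine ⟨Multiset.count_eq_zero.mpr fun h0 => (p.parts_pos h0).false, ?_⟩
    rw [size_eq_sum_toMultiset, Multiset.toFinsupp_toMultiset, p.parts_sum]
  · rintro ⟨h0, hs⟩
    refine mem_image.mpr ⟨⟨Finsupp.toMultiset w, fun {i} hi => ?_, ?_⟩, mem_univ _, ?_⟩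
    · rw [Finsupp.mem_toMultiset, Finsupp.mem_support_iff] at hi
      exact Nat.pos_of_ne_zero fun hi0 => hi (hi0 ▸ h0)
    · rw [← size_eq_sum_toMultiset, hs]
    · exact Finsupp.toMultiset_toFinsupp w

def weight (w : ℕ →₀ ℕ) : ℚ := w.prod fun k m => 1 / ((k : ℚ) ^ m * (m ! : ℚ))

lemma size_eq_add_size_erase (w : ℕ →₀ ℕ) (k : ℕ) : size w = k * w k + size (w.erase k) :=
  (Finsupp.add_sum_erase' w k _ fun _ => mul_zero _).symm

lemma weight_eq_mul_weight_erase (w : ℕ →₀ ℕ) (k : ℕ) :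
    weight w = 1 / ((k : ℚ) ^ w k * ((w k)! : ℚ)) * weight (w.erase k) :=
  (Finsupp.mul_prod_erase' w k _ fun _ => by simp).symm

lemma mul_apply_le_size (w : ℕ →₀ ℕ) (k : ℕ) : k * w k ≤ size w :=
  size_eq_add_size_erase w k ▸ Nat.le_add_right _ _

lemma apply_le_div_of_mem_partitions {j n : ℕ} {w : ℕ →₀ ℕ} (hj : 0 < j)
    (hw : w ∈ partitions n) : w j ≤ n / j := by
  rw [Nat.le_div_iff_mul_le hj, mul_comm, ← (mem_partitions.mp hw).2]
  exact mul_apply_le_size w j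

lemma sum_range_mul_apply_eq {n : ℕ} {w : ℕ →₀ ℕ} (hw : w ∈ partitions n) :
    ∑ k ∈ range (n + 1), k * w k = n := by
  have hsupp : w.support ⊆ range (n + 1) := fun k hk => by
    rw [mem_range_succ_iff, ← (mem_partitions.mp hw).2]
    exact (Nat.le_mul_of_pos_right k (Nat.pos_of_ne_zero (Finsupp.mem_support_iff.mp hk))).trans
      (mul_apply_le_size w k)
  rw [← Finsupp.sum_of_support_subset w hsupp _ fun _ _ => mul_zero _]
  exact (mem_partitions.mp hw).2

noncomputable def fiberWeight (j l n : ℕ) : ℚ :=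
  ∑ w ∈ (partitions n).filter (fun w => w j = l), weight w

lemma sum_mul_weight_eq_sum_fiberWeight {j : ℕ} (n : ℕ) (hj : 0 < j) (g : ℕ → ℚ) :
    ∑ w ∈ partitions n, g (w j) * weight w
      = ∑ l ∈ range (n / j + 1), g l * fiberWeight j l n := by
  rw [← sum_fiberwise_of_maps_to (g := fun w => w j)
    fun w hw => mem_range_succ_iff.mpr (apply_le_div_of_mem_partitions hj hw)]
  refine sum_congr rfl fun l _ => ?_
  rw [fiberWeight, mul_sum]
  exact sum_congr rfl fun w hw => by rw [(mem_filter.mp hw).2]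

lemma fiberWeight_eq_mul_fiberWeight_zero {j l n : ℕ} (hj : 0 < j) (hjl : j * l ≤ n) :
    fiberWeight j l n = 1 / ((j : ℚ) ^ l * (l ! : ℚ)) * fiberWeight j 0 (n - j * l) := by
  rw [fiberWeight, fiberWeight, mul_sum]
  refine sum_nbij' (fun w => w.erase j) (fun v => v.update j l) ?_ ?_ ?_ ?_ ?_
  · intro w hw
    simp only [mem_filter, mem_partitions] at hw ⊢
    obtain ⟨⟨h0, hs⟩, hl⟩ := hw
    have := size_eq_add_size_erase w j
    rw [hl] at this
    exact ⟨⟨by rwa [Finsupp.erase_ne hj.ne], by omega⟩, Finsupp.erase_same⟩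
  · intro v hv
    simp only [mem_filter, mem_partitions] at hv ⊢
    obtain ⟨⟨h0, hs⟩, hv0⟩ := hv
    have := size_eq_add_size_erase (v.update j l) j
    rw [Finsupp.erase_update_eq_erase, Finsupp.erase_of_notMem_support (by simpa)] at this
    refine ⟨⟨by rwa [Finsupp.update_apply, if_neg hj.ne], ?_⟩, by simp⟩
    rw [Finsupp.coe_update, Function.update_self] at this
    omega
  · intro w hw
    rw [Finsupp.update_erase_eq_update, ← (mem_filter.mp hw).2, Finsupp.update_self]
  · intro v hv
    rw [Finsupp.erase_update_eq_erase,
      Finsupp.erase_of_notMem_support (by simpa using (mem_filter.mp hv).2)]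
  · intro w hw
    rw [weight_eq_mul_weight_erase w j, (mem_filter.mp hw).2]

lemma sum_mul_apply_mul_weight_partitions {k n : ℕ} (hk : 0 < k) (hkn : k ≤ n) :
    ∑ w ∈ partitions n, ((k * w k : ℕ) : ℚ) * weight w
      = ∑ w ∈ partitions (n - k), weight w := by
  calc ∑ w ∈ partitions n, ((k * w k : ℕ) : ℚ) * weight w
      = ∑ l ∈ range (n / k + 1), ((k * l : ℕ) : ℚ) * fiberWeight k l n :=
        sum_mul_weight_eq_sum_fiberWeight n hk fun l => ((k * l : ℕ) : ℚ)
    _ = ∑ l ∈ range ((n - k) / k + 1), 1 * fiberWeight k l (n - k) := by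
        rw [sum_range_succ', Nat.div_eq_sub_div hk hkn, mul_zero, Nat.cast_zero, zero_mul,
          add_zero]
        refine sum_congr rfl fun l hl => ?_
        have hkl : k * l ≤ n - k :=
          Nat.mul_comm k l ▸ (Nat.le_div_iff_mul_le hk).mp (mem_range_succ_iff.mp hl)
        rw [fiberWeight_eq_mul_fiberWeight_zero hk (by rw [mul_add_one]; omega),
          fiberWeight_eq_mul_fiberWeight_zero hk hkl, mul_add_one, Nat.sub_add_eq,
          Nat.sub_right_comm, pow_succ, Nat.factorial_succ]
        push_cast
        field_simp
    _ = ∑ w ∈ partitions (n - k), weight w := by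
        simpa only [one_mul] using (sum_mul_weight_eq_sum_fiberWeight (n - k) hk fun _ => 1).symm

lemma sum_weight_partitions (n : ℕ) : ∑ w ∈ partitions n, weight w = 1 := by
  induction n using Nat.strong_induction_on with
  | _ n ih =>
  rcases Nat.eq_zero_or_pos n with rfl | hn
  · simp [partitions, weight]
  have hsize : ∀ w ∈ partitions n, (n : ℚ) * weight w
      = ∑ k ∈ range (n + 1), ((k * w k : ℕ) : ℚ) * weight w := fun w hw => by
    rw [← sum_mul, ← Nat.cast_sum, sum_range_mul_apply_eq hw]
  have hn' : (n : ℚ) ≠ 0 := by positivity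
  refine mul_left_cancel₀ hn' ?_
  calc (n : ℚ) * ∑ w ∈ partitions n, weight w
      = ∑ k ∈ range n,
          ∑ w ∈ partitions n, (((k + 1) * w (k + 1) : ℕ) : ℚ) * weight w := by
        rw [mul_sum, sum_congr rfl hsize, sum_comm, sum_range_succ']
        simp
    _ = ∑ k ∈ range n, 1 := sum_congr rfl fun k hk => by
        rw [sum_mul_apply_mul_weight_partitions k.succ_pos (mem_range.mp hk), ih _ (by omega)]
    _ = (n : ℚ) * 1 := by simp

lemma sum_range_one_div_mul_fiberWeight_zero {j : ℕ} (hj : 0 < j) (m : ℕ) :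
    ∑ l ∈ range (m / j + 1), 1 / ((j : ℚ) ^ l * (l ! : ℚ)) * fiberWeight j 0 (m - j * l)
      = 1 := by
  have h := sum_mul_weight_eq_sum_fiberWeight m hj fun _ => 1
  simp only [one_mul] at h
  refine Eq.trans (sum_congr rfl fun l hl => (fiberWeight_eq_mul_fiberWeight_zero hj ?_).symm)
    (h.symm.trans (sum_weight_partitions m))
  rw [mul_comm]
  exact (Nat.le_div_iff_mul_le hj).mp (mem_range_succ_iff.mp hl)

lemma fiberWeight_zero_eq_sum_range {j : ℕ} (hj : 0 < j) (m : ℕ) :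
    fiberWeight j 0 m
      = ∑ k ∈ range (m / j + 1), (-1 : ℚ) ^ k / ((j : ℚ) ^ k * (k ! : ℚ)) :=
  eq_sum_range_of_sum_range_mul_eq_one (sum_range_neg_one_pow_div_mul_one_div_eq_zero_pow hj)
    (sum_range_one_div_mul_fiberWeight_zero hj) m

end PartitionWeight

theorem stmt0_general (n j l : ℕ) (hj : 0 < j) (hjl : j * l ≤ n) :
    (∑ᶠ (w : ℕ →₀ ℕ) (_ : w 0 = 0 ∧ (w.sum fun k m => k * m) = n ∧ w j = l),
      ∏ k ∈ w.support, (1 : ℚ) / ((k : ℚ) ^ (w k) * ((w k)! : ℚ)))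
    = (1 / ((j : ℚ) ^ l * (l ! : ℚ))) *
      ∑ k ∈ Finset.range ((n - j * l) / j + 1), (-1 : ℚ) ^ k / ((j : ℚ) ^ k * (k ! : ℚ)) := by
  have hfiber : (∑ᶠ (w : ℕ →₀ ℕ) (_ : w 0 = 0 ∧ (w.sum fun k m => k * m) = n ∧ w j = l),
      ∏ k ∈ w.support, (1 : ℚ) / ((k : ℚ) ^ (w k) * ((w k)! : ℚ)))
      = PartitionWeight.fiberWeight j l n :=
    finsum_cond_eq_sum_of_cond_iff _ fun _ => by
      rw [mem_filter, PartitionWeight.mem_partitions, PartitionWeight.size, and_assoc]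
  rw [hfiber, PartitionWeight.fiberWeight_eq_mul_fiberWeight_zero hj hjl,
    PartitionWeight.fiberWeight_zero_eq_sum_range hj]

/-- For positive integers `n`, `j` and a natural number `l` with `j·l ≤ n`, the
sum over all finitely supported functions `w : ℕ → ℕ` (supported on positive integers)
with `∑ k, k·w k = n` and `w j = l` of `∏_{k≥1} 1/(k^{w k}·(w k)!)` equals
`(1/(j^l·l!))·∑_{k=0}^{⌊(n−j·l)/j⌋} (−1)^k/(j^k·k!)`, as rational numbers. -/
theorem stmt0 (n j l : ℕ) (hn : 0 < n) (hj : 0 < j) (hjl : j * l ≤ n) :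
    (∑ᶠ (w : ℕ →₀ ℕ) (_ : w 0 = 0 ∧ (w.sum fun k m => k * m) = n ∧ w j = l),
      ∏ k ∈ w.support, (1 : ℚ) / ((k : ℚ) ^ (w k) * ((w k)! : ℚ)))
    = (1 / ((j : ℚ) ^ l * (l ! : ℚ))) *
      ∑ k ∈ Finset.range ((n - j * l) / j + 1), (-1 : ℚ) ^ k / ((j : ℚ) ^ k * (k ! : ℚ)) :=
  stmt0_general n j l hj hjl
end

section
/- Let x : ℕ → ℝ be a probability distribution on the natural numbers: x_l ≥ 0 for all l, Σ_{l=0}^∞ x_l = 1 (summable), and suppose the mean μ := Σ_{l=0}^∞ l·x_l exists (the series is summable) with μ > 0, and that the series Σ_{l=0}^∞ x_l·log(x_l) is summable. Then the Shannon entropy satisfies −Σ_{l=0}^∞ x_l·log(x_l) ≤ (μ+1)·log(μ+1) − μ·log(μ). -/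
/-!
Gibbs' inequality `∑ xₗ log qₗ ≤ ∑ xₗ log xₗ`, taken against the geometric distribution
`qₗ = (μ+1)⁻¹ (μ/(μ+1))ˡ` of mean `μ`: since `log qₗ` is affine in `l`, the left-hand side only
depends on the total mass and the mean of `x`, and equals `μ log μ - (μ+1) log (μ+1)`.
-/

open Real

theorem Real.sub_le_mul_log_sub_mul_log {x y : ℝ} (hx : 0 ≤ x) (hy : 0 < y) :
    x - y ≤ x * log x - x * log y := by
  rcases hx.eq_or_lt with rfl | hx
  · simpa using hy.le
  have h := mul_le_mul_of_nonneg_left (log_le_sub_one_of_pos (div_pos hy hx)) hx.le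
  rw [log_div hy.ne' hx.ne', mul_sub, mul_sub, mul_div_cancel₀ _ hx.ne'] at h
  linarith

theorem Real.tsum_mul_log_le_tsum_mul_log {ι : Type*} {x q : ι → ℝ} (hx : ∀ i, 0 ≤ x i)
    (hq : ∀ i, 0 < q i) (hxs : Summable x) (hqs : Summable q)
    (hxx : Summable fun i => x i * log (x i)) (hxq : Summable fun i => x i * log (q i))
    (hmass : ∑' i, q i ≤ ∑' i, x i) :
    ∑' i, x i * log (q i) ≤ ∑' i, x i * log (x i) := by
  have h := (hxs.sub hqs).tsum_le_tsum (fun i => sub_le_mul_log_sub_mul_log (hx i) (hq i))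
    (hxx.sub hxq)
  rw [hxs.tsum_sub hqs, hxx.tsum_sub hxq] at h
  linarith

noncomputable def geomWeight (μ : ℝ) (l : ℕ) : ℝ := (μ + 1)⁻¹ * (μ / (μ + 1)) ^ l

section geomWeight

variable {μ : ℝ}

theorem geomWeight_pos (hμ : 0 < μ) (l : ℕ) : 0 < geomWeight μ l := by
  unfold geomWeight; positivity

theorem hasSum_geomWeight (hμ : 0 ≤ μ) : HasSum (geomWeight μ) 1 := by
  have hμ1 : 0 < μ + 1 := by linarith
  have hr : μ / (μ + 1) < 1 := (div_lt_one hμ1).2 (by linarith)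
  have h := (hasSum_geometric_of_lt_one (by positivity) hr).mul_left (μ + 1)⁻¹
  rwa [one_sub_div hμ1.ne', add_sub_cancel_left, one_div, inv_inv, inv_mul_cancel₀ hμ1.ne'] at h

theorem log_geomWeight (hμ : 0 < μ) (l : ℕ) :
    log (geomWeight μ l) = -log (μ + 1) + log (μ / (μ + 1)) * l := by
  rw [geomWeight, log_mul (by positivity) (by positivity), log_inv, log_pow, mul_comm]

theorem hasSum_mul_log_geomWeight {x : ℕ → ℝ} (hμ : 0 < μ) (hx : HasSum x 1)
    (hmean : HasSum (fun l : ℕ => (l : ℝ) * x l) μ) :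
    HasSum (fun l => x l * log (geomWeight μ l)) (μ * log μ - (μ + 1) * log (μ + 1)) := by
  have hlog : (fun l => x l * log (geomWeight μ l))
      = fun l => -log (μ + 1) * x l + log (μ / (μ + 1)) * ((l : ℝ) * x l) := by
    ext l
    rw [log_geomWeight hμ]
    ring
  have hval : μ * log μ - (μ + 1) * log (μ + 1) = -log (μ + 1) * 1 + log (μ / (μ + 1)) * μ := by
    rw [log_div hμ.ne' (by positivity)]
    ring
  rw [hlog, hval]
  exact (hx.mul_left _).add (hmean.mul_left _)

end geomWeight

/-- A probability distribution `x` on `ℕ` with mean `μ > 0` and summable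
entropy series has Shannon entropy at most `(μ+1)·log(μ+1) − μ·log μ`. -/
theorem stmt2 (x : ℕ → ℝ) (hx : ∀ l, 0 ≤ x l) (hsum : Summable x)
    (htot : ∑' l : ℕ, x l = 1) (μ : ℝ)
    (hμsum : Summable fun l : ℕ => (l : ℝ) * x l)
    (hμ : ∑' l : ℕ, (l : ℝ) * x l = μ) (hμpos : 0 < μ)
    (hent : Summable fun l : ℕ => x l * Real.log (x l)) :
    -∑' l : ℕ, x l * Real.log (x l) ≤ (μ + 1) * Real.log (μ + 1) - μ * Real.log μ := by
  have hgeom := hasSum_geomWeight hμpos.le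
  have hcross := hasSum_mul_log_geomWeight hμpos (htot ▸ hsum.hasSum) (hμ ▸ hμsum.hasSum)
  have hgibbs := tsum_mul_log_le_tsum_mul_log hx (geomWeight_pos hμpos) hsum hgeom.summable
    hent hcross.summable (by rw [hgeom.tsum_eq, htot])
  rw [hcross.tsum_eq] at hgibbs
  linarith
end

section
/- Let j be a positive integer and define the Poisson probabilities p_l := e^{−1/j}/(l!·j^l) for l ∈ ℕ. Then the Rényi entropies converge to the von Neumann entropy as q → 1 from above: the function q ↦ (1/(1−q))·log(Σ_{l=0}^∞ p_l^q) tends, as q → 1⁺ (within (1,∞)), to −Σ_{l=0}^∞ p_l·log(p_l) = 1/j + e^{−1/j}·Σ_{l=0}^∞ log(l!·j^l)/(l!·j^l). -/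
open scoped Nat

/-! Write `S q = ∑ p_l ^ q`. As `S 1 = ∑ p_l = 1`, the Rényi entropy `log (S q) / (1 - q)` is
minus a difference quotient of `log ∘ S` at `q = 1`, so it tends to `-S'(1⁺) = -∑ p_l log p_l`.
Differentiating under the sum is dominated convergence, with the bound
`|p ^ q - p| ≤ (q - 1) (-p log p)` for `0 < p ≤ 1 ≤ q`, which follows from `1 - e^y ≤ -y`.
The series `∑ p_l log p_l` converges because `|p log p| ≤ 2 √p` on `[0, 1]` and `∑ √p_l < ∞`
for the Poisson weights; the closed form comes from `log p_l = -1/j - log (l! j^l)`. -/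

open Filter Real Set Topology

noncomputable section

variable {ι : Type*}

def renyiEntropy (p : ι → ℝ) (q : ℝ) : ℝ := 1 / (1 - q) * log (∑' i, p i ^ q)

def shannonEntropy (p : ι → ℝ) : ℝ := -∑' i, p i * log (p i)

lemma abs_rpow_sub_self_le {p q : ℝ} (hp : 0 < p) (hp1 : p ≤ 1) (hq : 1 ≤ q) :
    |p ^ q - p| ≤ (q - 1) * -(p * log p) := by
  have hle : p ^ q ≤ p := by
    simpa using Real.rpow_le_rpow_of_exponent_ge hp hp1 hq
  have hfactor : p ^ q = p * exp (log p * (q - 1)) := by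
    rw [← Real.rpow_def_of_pos hp, ← Real.rpow_one_add' hp.le (by linarith)]
    ring_nf
  have hexp := Real.add_one_le_exp (log p * (q - 1))
  rw [abs_of_nonpos (by linarith), hfactor]
  nlinarith

lemma summable_mul_log_of_summable_sqrt {p : ι → ℝ} (hp : ∀ i, 0 ≤ p i) (hp1 : ∀ i, p i ≤ 1)
    (hs : Summable fun i => √(p i)) : Summable fun i => p i * log (p i) := by
  refine .of_norm_bounded (hs.mul_left 2) fun i => ?_
  rcases (hp i).eq_or_lt with h | h
  · simp [← h]
  have hsqrt := Real.abs_log_mul_self_lt (√(p i)) (Real.sqrt_pos.2 h)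
    (Real.sqrt_le_one.2 (hp1 i))
  have hp_eq : p i * log (p i) = 2 * √(p i) * (log √(p i) * √(p i)) := by
    rw [Real.log_sqrt (hp i)]
    nth_rewrite 1 [← Real.mul_self_sqrt (hp i)]
    ring
  rw [Real.norm_eq_abs, hp_eq, abs_mul, abs_of_nonneg (by positivity)]
  nlinarith [Real.sqrt_nonneg (p i), abs_nonneg (log √(p i) * √(p i))]

lemma hasDerivWithinAt_tsum_rpow {p : ι → ℝ} (hp : ∀ i, 0 < p i) (hp1 : ∀ i, p i ≤ 1)
    (hsum : Summable p) (hlog : Summable fun i => p i * log (p i)) :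
    HasDerivWithinAt (fun q : ℝ => ∑' i, p i ^ q) (∑' i, p i * log (p i)) (Ioi 1) 1 := by
  rw [hasDerivWithinAt_iff_tendsto_slope' self_notMem_Ioi]
  have hslope : ∀ i, Tendsto (fun q => (p i ^ q - p i) / (q - 1)) (𝓝[>] 1)
      (𝓝 (p i * log (p i))) := by
    intro i
    have h := hasDerivAt_iff_tendsto_slope.1
      (Real.hasStrictDerivAt_const_rpow (hp i) 1).hasDerivAt
    rw [slope_fun_def_field, Real.rpow_one] at h
    exact h.mono_left (nhdsWithin_mono 1 fun q hq => ne_of_gt hq)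
  refine (tendsto_tsum_of_dominated_convergence hlog.neg hslope ?_).congr' ?_
  · filter_upwards [self_mem_nhdsWithin] with q (hq : 1 < q) i
    rw [Real.norm_eq_abs, abs_div, abs_of_pos (sub_pos.2 hq),
      div_le_iff₀ (sub_pos.2 hq), mul_comm]
    exact abs_rpow_sub_self_le (hp i) (hp1 i) hq.le
  · filter_upwards [self_mem_nhdsWithin] with q (hq : 1 < q)
    have hsumq : Summable fun i => p i ^ q := hsum.of_nonneg_of_le
      (fun i => (Real.rpow_pos_of_pos (hp i) q).le)
      (fun i => by simpa using Real.rpow_le_rpow_of_exponent_ge (hp i) (hp1 i) hq.le)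
    simp only [slope_def_field, Real.rpow_one]
    rw [tsum_div_const, hsumq.tsum_sub hsum]

theorem tendsto_renyiEntropy_shannonEntropy {p : ι → ℝ} (hp : ∀ i, 0 < p i) (hsum : HasSum p 1)
    (hlog : Summable fun i => p i * log (p i)) :
    Tendsto (renyiEntropy p) (𝓝[>] 1) (𝓝 (shannonEntropy p)) := by
  have hp1 : ∀ i, p i ≤ 1 := fun i => le_hasSum hsum i fun j _ => (hp j).le
  have hS1 : ∑' i, p i ^ (1 : ℝ) = 1 := by simpa using hsum.tsum_eq
  have hderiv := ((hasDerivWithinAt_tsum_rpow hp hp1 hsum.summable hlog).log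
    (by rw [hS1]; exact one_ne_zero))
  rw [hasDerivWithinAt_iff_tendsto_slope' self_notMem_Ioi, hS1, div_one] at hderiv
  refine hderiv.neg.congr fun q => ?_
  simp only [renyiEntropy, slope_def_field, hS1, Real.log_one, sub_zero]
  rw [← neg_sub q 1, div_neg, neg_mul, one_div_mul_eq_div]

/-- The Poisson distribution of mean `1 / x`, written as in the paper with `x = j`. -/
def poissonWeight (x : ℝ) (l : ℕ) : ℝ := exp (-1 / x) / (l ! * x ^ l)

lemma poissonWeight_eq_mul_pow_div_factorial (x : ℝ) (l : ℕ) :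
    poissonWeight x l = exp (-1 / x) * ((1 / x) ^ l / l !) := by
  rw [poissonWeight, div_pow, one_pow, div_div, mul_one_div, mul_comm (x ^ l)]

lemma poissonWeight_pos {x : ℝ} (hx : 0 < x) (l : ℕ) : 0 < poissonWeight x l := by
  unfold poissonWeight; positivity

lemma hasSum_poissonWeight (x : ℝ) : HasSum (poissonWeight x) 1 := by
  have h := (NormedSpace.expSeries_div_hasSum_exp (1 / x)).mul_left (exp (-1 / x))
  rwa [← funext (poissonWeight_eq_mul_pow_div_factorial x), ← Real.exp_eq_exp_ℝ,
    ← Real.exp_add, neg_div, neg_add_cancel, Real.exp_zero] at h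

lemma summable_sqrt_poissonWeight {x : ℝ} (hx : 0 < x) :
    Summable fun l => √(poissonWeight x l) := by
  -- `√(a b) ≤ a + b` with `a = e^{-1/x} (2/x)^l / l!` and `b = 2^{-l}`
  refine .of_nonneg_of_le (fun l => Real.sqrt_nonneg _) (fun l => ?_)
    (((Real.summable_pow_div_factorial (2 / x)).mul_left (exp (-1 / x))).add summable_geometric_two)
  have hab : poissonWeight x l = exp (-1 / x) * ((2 / x) ^ l / l !) * (1 / 2) ^ l := by
    rw [poissonWeight_eq_mul_pow_div_factorial, mul_assoc, div_mul_eq_mul_div, ← mul_pow]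
    ring_nf
  have ha : 0 ≤ exp (-1 / x) * ((2 / x) ^ l / l !) := by positivity
  rw [hab, Real.sqrt_le_left (by positivity)]
  nlinarith [pow_nonneg (by norm_num : (0 : ℝ) ≤ 1 / 2) l]

lemma summable_poissonWeight_mul_log {x : ℝ} (hx : 0 < x) :
    Summable fun l => poissonWeight x l * log (poissonWeight x l) :=
  summable_mul_log_of_summable_sqrt (fun l => (poissonWeight_pos hx l).le)
    (fun l => le_hasSum (hasSum_poissonWeight x) l fun k _ => (poissonWeight_pos hx k).le)
    (summable_sqrt_poissonWeight hx)

lemma neg_poissonWeight_mul_log {x : ℝ} (hx : 0 < x) (l : ℕ) :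
    -(poissonWeight x l * log (poissonWeight x l)) =
      poissonWeight x l / x + exp (-1 / x) * (log (l ! * x ^ l) / (l ! * x ^ l)) := by
  have ha : (0 : ℝ) < l ! * x ^ l := by positivity
  rw [poissonWeight, Real.log_div (Real.exp_ne_zero _) ha.ne', Real.log_exp]
  ring

lemma shannonEntropy_poissonWeight {x : ℝ} (hx : 0 < x) :
    shannonEntropy (poissonWeight x) =
      1 / x + exp (-1 / x) * ∑' l : ℕ, log (l ! * x ^ l) / (l ! * x ^ l) := by
  have hsum := hasSum_poissonWeight x
  have hlog : Summable fun l : ℕ => log (l ! * x ^ l) / (l ! * x ^ l) := by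
    refine ((summable_poissonWeight_mul_log hx).neg.sub (hsum.summable.div_const x)).div_const
      (exp (-1 / x)) |>.congr fun l => ?_
    rw [neg_poissonWeight_mul_log hx, add_sub_cancel_left, mul_div_cancel_left₀ _ (Real.exp_ne_zero _)]
  rw [shannonEntropy, ← tsum_neg, tsum_congr (neg_poissonWeight_mul_log hx),
    ((hsum.div_const x).add (hlog.hasSum.mul_left _)).tsum_eq]

end

/-- For the Poisson probabilities `p_l = e^{−1/j}/(l!·j^l)`, the Rényi entropy
`q ↦ (1/(1−q))·log(∑ p_l^q)` tends, as `q → 1⁺`, to the von Neumann entropy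
`−∑ p_l·log p_l = 1/j + e^{−1/j}·∑ log(l!·j^l)/(l!·j^l)`. -/
theorem stmt5 (j : ℕ) (hj : 0 < j) :
    Filter.Tendsto
      (fun q : ℝ =>
        (1 / (1 - q)) *
          Real.log (∑' l : ℕ, (Real.exp (-1 / (j : ℝ)) / ((l ! : ℝ) * (j : ℝ) ^ l)) ^ q))
      (nhdsWithin 1 (Set.Ioi 1))
      (nhds (-∑' l : ℕ,
        (Real.exp (-1 / (j : ℝ)) / ((l ! : ℝ) * (j : ℝ) ^ l)) *
          Real.log (Real.exp (-1 / (j : ℝ)) / ((l ! : ℝ) * (j : ℝ) ^ l)))) ∧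
    (-∑' l : ℕ,
        (Real.exp (-1 / (j : ℝ)) / ((l ! : ℝ) * (j : ℝ) ^ l)) *
          Real.log (Real.exp (-1 / (j : ℝ)) / ((l ! : ℝ) * (j : ℝ) ^ l))
      = 1 / (j : ℝ) +
        Real.exp (-1 / (j : ℝ)) *
          ∑' l : ℕ, Real.log ((l ! : ℝ) * (j : ℝ) ^ l) / ((l ! : ℝ) * (j : ℝ) ^ l)) := by
  have hj : (0 : ℝ) < j := Nat.cast_pos.2 hj
  exact ⟨tendsto_renyiEntropy_shannonEntropy (poissonWeight_pos hj) (hasSum_poissonWeight j)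
    (summable_poissonWeight_mul_log hj), shannonEntropy_poissonWeight hj⟩
end

section
/- Fix a positive integer j. For each n ≥ j define p_l(n) := (1/(l!·j^l))·Σ_{k=0}^{⌊(n−j·l)/j⌋} (−1)^k/(j^k·k!) for 0 ≤ l ≤ ⌊n/j⌋. Then the finite entropies s_j(n) := −Σ_{l=0}^{⌊n/j⌋} p_l(n)·log(p_l(n)) converge, as n → ∞, to s_j := 1/j + e^{−1/j}·Σ_{l=0}^∞ log(l!·j^l)/(l!·j^l). -/
/-!
With `x = 1 / j`, the `l`-th probability is `p_l(n) = (x ^ l / l!) * T_m(-x)`, where `T_m` is a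
partial sum of the exponential series and `m → ∞` with `n`. Hence `p_l(n)` tends to the Poisson
weight `π_l = e^{-x} x ^ l / l!` for every fixed `l`. Uniformly in `n`, `|p_l(n)| ≤ e^{3x} 2^{-l}`,
and `|t log t| ≤ 2 √|t| + t²` turns this into a summable bound on the summands of the entropy, so
dominated convergence gives convergence to the Poisson entropy `-∑ π_l log π_l`. Splitting
`log π_l = -x + log (x ^ l / l!)` evaluates it as `x + e^{-x} ∑ log (l! j^l) / (l! j^l)`.
-/

open scoped Nat
open Filter Finset Real Topology

namespace Real

theorem abs_negMulLog_le_two_sqrt_add_sq (t : ℝ) : |negMulLog t| ≤ 2 * √|t| + t ^ 2 := by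
  rw [negMulLog_eq_neg, abs_neg, ← log_abs, abs_mul]
  rcases (abs_nonneg t).eq_or_lt with h0 | h0
  · simp [← h0, sq_nonneg]
  rcases le_or_gt |t| 1 with h1 | h1
  · have h := abs_log_mul_self_rpow_lt |t| (1 / 2) h0 h1 (by norm_num)
    rw [← sqrt_eq_rpow, abs_mul, abs_of_nonneg (sqrt_nonneg _)] at h
    have hs : |t| = √|t| * √|t| := (mul_self_sqrt h0.le).symm
    nlinarith [sqrt_nonneg |t|, sq_nonneg t]
  · have hlog : |log (|t|)| ≤ |t| := by
      rw [abs_of_nonneg (log_nonneg h1.le)]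
      linarith [log_le_sub_one_of_pos h0]
    nlinarith [sqrt_nonneg |t|, sq_abs t, mul_le_mul_of_nonneg_left hlog h0.le]

theorem abs_negMulLog_le_of_abs_le {t b : ℝ} (h : |t| ≤ b) :
    |negMulLog t| ≤ 2 * √b + b ^ 2 := by
  have hb : |t| ^ 2 ≤ b ^ 2 := pow_le_pow_left₀ (abs_nonneg t) h 2
  rw [sq_abs] at hb
  linarith [abs_negMulLog_le_two_sqrt_add_sq t, sqrt_le_sqrt h]

theorem negMulLog_one_div (x : ℝ) : negMulLog (1 / x) = log x / x := by
  rw [negMulLog, one_div, log_inv]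
  ring

theorem hasSum_pow_div_factorial (x : ℝ) : HasSum (fun k => x ^ k / k !) (exp x) := by
  simpa [exp_eq_exp_ℝ] using NormedSpace.expSeries_div_hasSum_exp x

theorem abs_sum_range_pow_div_factorial_le (x : ℝ) (m : ℕ) :
    |∑ k ∈ range m, x ^ k / k !| ≤ exp |x| :=
  (abs_sum_le_sum_abs _ _).trans <| by
    simpa [abs_div, abs_pow] using sum_le_exp_of_nonneg (abs_nonneg x) m

theorem abs_pow_div_factorial_le (x : ℝ) {r : ℝ} (hr : 0 < r) (l : ℕ) :
    |x ^ l / l !| ≤ exp (|x| / r) * r ^ l := by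
  have h := pow_div_factorial_le_exp _ (div_nonneg (abs_nonneg x) hr.le) l
  rw [div_pow, div_div, mul_comm, ← div_div, div_le_iff₀ (by positivity)] at h
  simpa [abs_div, abs_pow] using h

end Real

theorem summable_two_mul_sqrt_add_sq_geometric {C r : ℝ} (hr0 : 0 ≤ r) (hr1 : r < 1) :
    Summable fun l : ℕ => 2 * √(C * r ^ l) + (C * r ^ l) ^ 2 := by
  have hsqrt : ∀ l : ℕ, √(C * r ^ l) = √C * √r ^ l := fun l => by
    rw [sqrt_mul' C (pow_nonneg hr0 l), ← sq_sqrt hr0, ← pow_mul, mul_comm 2, pow_mul,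
      sqrt_sq (pow_nonneg (sqrt_nonneg _) l), sq_sqrt hr0]
  have hsq : ∀ l : ℕ, (C * r ^ l) ^ 2 = C ^ 2 * (r ^ 2) ^ l := fun l => by ring
  simp only [hsqrt, hsq]
  have hr1' : √r < 1 := (sqrt_lt' one_pos).2 (by simpa using hr1)
  exact ((summable_geometric_of_lt_one (sqrt_nonneg r) hr1').mul_left _).mul_left 2 |>.add
    ((summable_geometric_of_lt_one (sq_nonneg r) (by nlinarith)).mul_left _)

theorem summable_negMulLog_of_abs_le_geometric {a : ℕ → ℝ} {C r : ℝ} (hr0 : 0 ≤ r) (hr1 : r < 1)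
    (ha : ∀ l, |a l| ≤ C * r ^ l) : Summable fun l => negMulLog (a l) :=
  .of_norm_bounded (summable_two_mul_sqrt_add_sq_geometric hr0 hr1)
    fun l => abs_negMulLog_le_of_abs_le (ha l)

theorem tendsto_tsum_negMulLog_of_abs_le_geometric {α : Type*} {F : Filter α} {q : α → ℕ → ℝ}
    {q₀ : ℕ → ℝ} {C r : ℝ} (hr0 : 0 ≤ r) (hr1 : r < 1) (hq : ∀ n l, |q n l| ≤ C * r ^ l)
    (hlim : ∀ l, Tendsto (fun n => q n l) F (𝓝 (q₀ l))) :
    Tendsto (fun n => ∑' l, negMulLog (q n l)) F (𝓝 (∑' l, negMulLog (q₀ l))) :=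
  tendsto_tsum_of_dominated_convergence (summable_two_mul_sqrt_add_sq_geometric hr0 hr1)
    (fun l => (continuous_negMulLog.tendsto _).comp (hlim l))
    (.of_forall fun n l => abs_negMulLog_le_of_abs_le (hq n l))

theorem hasSum_negMulLog_exp_neg_mul_pow_div_factorial (x : ℝ) :
    HasSum (fun l : ℕ => negMulLog (exp (-x) * (x ^ l / l !)))
      (x + exp (-x) * ∑' l : ℕ, negMulLog (x ^ l / l !)) := by
  have hsum : Summable fun l : ℕ => negMulLog (x ^ l / l !) :=
    summable_negMulLog_of_abs_le_geometric (by norm_num) (by norm_num : (1 / 2 : ℝ) < 1)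
      (abs_pow_div_factorial_le x (by norm_num))
  have hexp : negMulLog (exp (-x)) * exp x = x := by
    rw [negMulLog, log_exp, exp_neg]
    field_simp
  have h := ((hasSum_pow_div_factorial x).mul_left (negMulLog (exp (-x)))).add
    (hsum.hasSum.mul_left (exp (-x)))
  rw [hexp] at h
  simpa only [negMulLog_mul, mul_comm (negMulLog (exp (-x)))] using h

theorem tendsto_sum_negMulLog_truncated_poisson (x : ℝ) {N : ℕ → ℕ} {m : ℕ → ℕ → ℕ}
    (hN : Tendsto N atTop atTop) (hm : ∀ l, Tendsto (fun n => m n l) atTop atTop) :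
    Tendsto (fun n => ∑ l ∈ range (N n),
        negMulLog (x ^ l / l ! * ∑ k ∈ range (m n l), (-x) ^ k / k !))
      atTop (𝓝 (x + exp (-x) * ∑' l : ℕ, negMulLog (x ^ l / l !))) := by
  set q : ℕ → ℕ → ℝ := fun n => (range (N n) : Set ℕ).indicator
    fun l => x ^ l / l ! * ∑ k ∈ range (m n l), (-x) ^ k / k ! with hq
  have hsum : ∀ n, ∑ l ∈ range (N n), negMulLog (x ^ l / l ! * ∑ k ∈ range (m n l), (-x) ^ k / k !)
      = ∑' l, negMulLog (q n l) := fun n => by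
    rw [sum_eq_tsum_indicator, ← Function.comp_def negMulLog,
      Set.indicator_comp_of_zero negMulLog_zero, hq]
    rfl
  simp only [hsum, ← (hasSum_negMulLog_exp_neg_mul_pow_div_factorial x).tsum_eq]
  refine tendsto_tsum_negMulLog_of_abs_le_geometric (C := exp (|x| / (1 / 2)) * exp |x|)
    (by norm_num) (by norm_num : (1 / 2 : ℝ) < 1) (fun n l => ?_) (fun l => ?_)
  · rw [← Real.norm_eq_abs]
    refine (norm_indicator_le_norm_self _ l).trans ?_
    rw [Real.norm_eq_abs, abs_mul, mul_right_comm]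
    gcongr
    · exact abs_pow_div_factorial_le x (by norm_num) l
    · simpa using abs_sum_range_pow_div_factorial_le (-x) (m n l)
  · have hl : ∀ᶠ n in atTop, l ∈ range (N n) := by
      simpa using hN.eventually_gt_atTop l
    refine Tendsto.congr' (hl.mono fun n hn => (Set.indicator_of_mem hn _).symm) ?_
    rw [mul_comm (exp (-x))]
    exact ((hasSum_pow_div_factorial (-x)).tendsto_sum_nat.comp (hm l)).const_mul _

theorem one_div_factorial_mul_pow (j : ℝ) (l : ℕ) : 1 / (l ! * j ^ l) = (1 / j) ^ l / l ! := by
  rw [div_pow, one_pow, div_div, mul_comm]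

theorem neg_one_pow_div_pow_mul_factorial (j : ℝ) (k : ℕ) :
    (-1) ^ k / (j ^ k * k !) = (-(1 / j)) ^ k / k ! := by
  rw [neg_pow (1 / j), div_pow, one_pow, mul_one_div, div_div]

/-- For fixed positive `j`, the finite entropies
`s_j(n) = −∑_{l=0}^{⌊n/j⌋} p_l(n)·log p_l(n)`, where
`p_l(n) = (1/(l!·j^l))·∑_{k=0}^{⌊(n−j·l)/j⌋} (−1)^k/(j^k·k!)`, converge as `n → ∞` to
`s_j = 1/j + e^{−1/j}·∑_{l} log(l!·j^l)/(l!·j^l)`. -/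
theorem stmt6 (j : ℕ) (hj : 0 < j) :
    Filter.Tendsto
      (fun n : ℕ =>
        -∑ l ∈ Finset.range (n / j + 1),
          ((1 / ((l ! : ℝ) * (j : ℝ) ^ l)) *
              ∑ k ∈ Finset.range ((n - j * l) / j + 1), (-1 : ℝ) ^ k / ((j : ℝ) ^ k * (k ! : ℝ))) *
            Real.log ((1 / ((l ! : ℝ) * (j : ℝ) ^ l)) *
              ∑ k ∈ Finset.range ((n - j * l) / j + 1), (-1 : ℝ) ^ k / ((j : ℝ) ^ k * (k ! : ℝ))))
      Filter.atTop
      (nhds (1 / (j : ℝ) +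
        Real.exp (-1 / (j : ℝ)) *
          ∑' l : ℕ, Real.log ((l ! : ℝ) * (j : ℝ) ^ l) / ((l ! : ℝ) * (j : ℝ) ^ l))) := by
  have hdiv : Tendsto (· / j) atTop atTop := Nat.tendsto_div_const_atTop hj.ne'
  have h := tendsto_sum_negMulLog_truncated_poisson (1 / j : ℝ)
    (tendsto_add_atTop_nat 1 |>.comp hdiv)
    (fun l => tendsto_add_atTop_nat 1 |>.comp <| hdiv.comp <| tendsto_sub_atTop_nat (j * l))
  simp only [← one_div_factorial_mul_pow, ← neg_one_pow_div_pow_mul_factorial, negMulLog_one_div]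
    at h
  rw [neg_div]
  refine h.congr fun n => ?_
  simp only [Function.comp_apply, negMulLog, neg_mul, sum_neg_distrib]
end

section
/- Let M be a positive integer and m an integer. Then ∫_{[0,2π]^M} exp(i·m·(θ_1+⋯+θ_M)) · ∏_{1≤a<b≤M} |exp(iθ_a) − exp(iθ_b)|² dθ_1⋯dθ_M equals M!·(2π)^M if m = 0, and equals 0 if m ≠ 0. -/
open scoped Real

open Finset MeasureTheory Complex Equiv

/-!
With `z_a = e^{iθ_a}`, the weight `∏_{a<b} |z_a − z_b|²` is `|det V(z)|² = det V(z) · conj (det V(z))`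
for the Vandermonde matrix `V(z)`. Since `conj z_a = z_a⁻¹`, the Leibniz expansion turns the integrand
into the signed sum over `σ, τ` of the torus characters `θ ↦ e^{i⟨m + σ − τ, θ⟩}`. A character
integrates to `(2π)^M` when its exponent vanishes and to `0` otherwise, and summing the exponent over
the coordinates shows that it vanishes only for `m = 0` and `σ = τ`. This leaves `M!` terms, each
with sign `(sgn σ)² = 1`.
-/

noncomputable def torusMonomial {ι : Type*} [Fintype ι] (k : ι → ℤ) (θ : ι → ℝ) : ℂ :=
  ∏ i, exp (I * k i * θ i)

section Torus

variable {ι : Type*} [Fintype ι]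

lemma torusMonomial_mul (k l : ι → ℤ) (θ : ι → ℝ) :
    torusMonomial k θ * torusMonomial l θ = torusMonomial (k + l) θ := by
  simp only [torusMonomial, ← prod_mul_distrib, ← Complex.exp_add, Pi.add_apply, Int.cast_add]
  congr! 2
  ring

lemma conj_torusMonomial (k : ι → ℤ) (θ : ι → ℝ) :
    starRingEnd ℂ (torusMonomial k θ) = torusMonomial (-k) θ := by
  simp only [torusMonomial, map_prod, ← Complex.exp_conj, map_mul, conj_I, conj_ofReal,
    map_intCast, Pi.neg_apply, Int.cast_neg]
  congr! 2
  ring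

lemma continuous_torusMonomial (k : ι → ℤ) : Continuous (torusMonomial k) := by
  unfold torusMonomial
  fun_prop

lemma setIntegral_univ_pi_prod {s : ι → Set ℝ} (f : ι → ℝ → ℂ) :
    ∫ x in Set.univ.pi s, ∏ i, f i (x i) = ∏ i, ∫ t in s i, f i t := by
  rw [volume_pi, Measure.restrict_pi_pi, integral_fintype_prod_eq_prod]

lemma integral_exp_I_int_mul_Icc (k : ℤ) :
    ∫ t in Set.Icc (0 : ℝ) (2 * π), exp (I * k * t) = if k = 0 then ((2 * π : ℝ) : ℂ) else 0 := by
  rw [integral_Icc_eq_integral_Ioc, ← intervalIntegral.integral_of_le (by positivity)]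
  split_ifs with hk
  · simp [hk]
  · have hc : I * k ≠ 0 := mul_ne_zero I_ne_zero (Int.cast_ne_zero.2 hk)
    have hperiod : I * k * ((2 * π : ℝ) : ℂ) = k * (2 * π * I) := by push_cast; ring
    rw [integral_exp_mul_complex hc, hperiod, exp_int_mul_two_pi_mul_I]
    simp

lemma integral_torusMonomial (k : ι → ℤ) :
    ∫ θ in Set.univ.pi fun _ : ι => Set.Icc (0 : ℝ) (2 * π), torusMonomial k θ
      = if k = 0 then ((2 * π : ℝ) : ℂ) ^ Fintype.card ι else 0 := by
  simp only [torusMonomial]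
  rw [setIntegral_univ_pi_prod fun i t => exp (I * k i * t)]
  simp only [integral_exp_I_int_mul_Icc, prod_ite_zero, prod_const, card_univ, funext_iff,
    mem_univ, true_implies, Pi.zero_apply]

end Torus

lemma prod_norm_sub_sq_eq_norm_det_vandermonde_sq {K : Type*} [NormedField K] {n : ℕ}
    (z : Fin n → K) :
    ∏ p ∈ univ.filter (fun p : Fin n × Fin n => p.1 < p.2), ‖z p.1 - z p.2‖ ^ 2
      = ‖(Matrix.vandermonde z).det‖ ^ 2 := by
  rw [Matrix.det_vandermonde, norm_prod, ← prod_pow, prod_filter, Fintype.prod_prod_type]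
  refine prod_congr rfl fun i _ => ?_
  rw [norm_prod, ← prod_pow, ← prod_filter, filter_lt_eq_Ioi]
  exact prod_congr rfl fun j _ => by rw [norm_sub_rev]

lemma det_vandermonde_exp_I {n : ℕ} (θ : Fin n → ℝ) :
    (Matrix.vandermonde fun a => exp (I * θ a)).det
      = ∑ σ : Perm (Fin n), ((Perm.sign σ : ℤ) : ℂ) * torusMonomial (fun a => (σ a : ℕ)) θ := by
  rw [Matrix.det_apply', ← Equiv.sum_comp (Equiv.inv (Perm (Fin n)))]
  refine sum_congr rfl fun σ _ => ?_
  rw [Equiv.inv_apply, Perm.sign_inv, torusMonomial, ← Equiv.prod_comp σ]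
  congr 1
  refine prod_congr rfl fun i _ => ?_
  rw [Matrix.vandermonde_apply, Perm.coe_inv, symm_apply_apply, ← Complex.exp_nat_mul]
  push_cast
  ring_nf

lemma exp_mul_norm_det_vandermonde_exp_I_sq {n : ℕ} (m : ℤ) (θ : Fin n → ℝ) :
    torusMonomial (fun _ => m) θ * ((‖(Matrix.vandermonde fun a => exp (I * θ a)).det‖ ^ 2 : ℝ) : ℂ)
      = ∑ σ : Perm (Fin n), ∑ τ : Perm (Fin n), ((Perm.sign σ * Perm.sign τ : ℤˣ) : ℂ) *
          torusMonomial (fun a => m + (σ a : ℕ) - (τ a : ℕ)) θ := by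
  rw [ofReal_pow, ← mul_conj', det_vandermonde_exp_I, map_sum, sum_mul_sum, mul_sum]
  refine sum_congr rfl fun σ _ => (mul_sum _ _ _).trans (sum_congr rfl fun τ _ => ?_)
  rw [map_mul, map_intCast, conj_torusMonomial]
  have hk : (fun a => m + (σ a : ℕ) - (τ a : ℕ) : Fin n → ℤ)
      = (fun _ => m) + (fun a => ((σ a : ℕ) : ℤ)) + -fun a => ((τ a : ℕ) : ℤ) := by
    funext a
    simp [sub_eq_add_neg]
  rw [hk, ← torusMonomial_mul, ← torusMonomial_mul, Units.val_mul, Int.cast_mul]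
  ring

lemma const_add_sub_perm_eq_zero_iff {ι : Type*} [Fintype ι] [Nonempty ι] {f : ι → ℤ}
    (hf : Function.Injective f) {m : ℤ} {σ τ : Perm ι} :
    (fun a => m + f (σ a) - f (τ a)) = 0 ↔ m = 0 ∧ σ = τ := by
  constructor
  · intro h
    -- `σ` and `τ` preserve `∑ a, f a`, so summing `h` over `ι` leaves `card ι • m = 0`.
    have hm : m = 0 := by
      simpa [sum_add_distrib, sum_sub_distrib, Equiv.sum_comp σ f, Equiv.sum_comp τ f] using
        congr_arg (fun g : ι → ℤ => ∑ a, g a) h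
    subst hm
    refine ⟨rfl, Equiv.ext fun a => hf ?_⟩
    simpa [sub_eq_zero] using congr_fun h a
  · rintro ⟨rfl, rfl⟩
    funext a
    simp

/-- For a positive integer `M` and an integer `m`,
`∫_{[0,2π]^M} exp(i·m·(θ_1+⋯+θ_M))·∏_{a<b} |e^{iθ_a} − e^{iθ_b}|² dθ` equals `M!·(2π)^M`
if `m = 0` and `0` otherwise. -/
theorem stmt12 (M : ℕ) (hM : 0 < M) (m : ℤ) :
    (∫ θ : Fin M → ℝ in Set.univ.pi fun _ : Fin M => Set.Icc (0 : ℝ) (2 * Real.pi),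
      Complex.exp (Complex.I * (m : ℂ) * ((∑ a, θ a : ℝ) : ℂ)) *
        ∏ p ∈ Finset.univ.filter (fun p : Fin M × Fin M => p.1 < p.2),
          ((‖Complex.exp (Complex.I * (θ p.1 : ℂ)) -
              Complex.exp (Complex.I * (θ p.2 : ℂ))‖ ^ 2 : ℝ) : ℂ))
    = if m = 0 then ((M.factorial : ℂ) * ((2 * Real.pi : ℝ) : ℂ) ^ M) else 0 := by
  have : Nonempty (Fin M) := Fin.pos_iff_nonempty.1 hM
  have hintegrand (θ : Fin M → ℝ) :
      exp (I * m * ((∑ a, θ a : ℝ) : ℂ)) *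
        ∏ p ∈ univ.filter (fun p : Fin M × Fin M => p.1 < p.2),
          ((‖exp (I * θ p.1) - exp (I * θ p.2)‖ ^ 2 : ℝ) : ℂ)
      = ∑ σ : Perm (Fin M), ∑ τ : Perm (Fin M), ((Perm.sign σ * Perm.sign τ : ℤˣ) : ℂ) *
          torusMonomial (fun a => m + (σ a : ℕ) - (τ a : ℕ)) θ := by
    rw [← ofReal_prod, prod_norm_sub_sq_eq_norm_det_vandermonde_sq (fun a => exp (I * θ a)),
      ← exp_mul_norm_det_vandermonde_exp_I_sq, torusMonomial, ← exp_sum, ofReal_sum, mul_sum]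
  have hintegrable (k : Fin M → ℤ) :
      IntegrableOn (torusMonomial k) (Set.univ.pi fun _ => Set.Icc 0 (2 * π)) :=
    (continuous_torusMonomial k).continuousOn.integrableOn_compact
      (isCompact_univ_pi fun _ => isCompact_Icc)
  have hval : Function.Injective fun a : Fin M => ((a : ℕ) : ℤ) :=
    Nat.cast_injective.comp Fin.val_injective
  simp_rw [hintegrand]
  rw [integral_finsetSum _ fun σ _ => integrable_finsetSum _ fun τ _ =>
    (hintegrable _).const_mul _]
  simp_rw [integral_finsetSum _ fun τ _ => (hintegrable _).const_mul _, integral_const_mul,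
    integral_torusMonomial, const_add_sub_perm_eq_zero_iff hval, Fintype.card_fin]
  by_cases hm : m = 0
  · simp only [hm, true_and, mul_ite, mul_zero, sum_ite_eq, mem_univ, if_true,
      Int.units_mul_self, Units.val_one, Int.cast_one, one_mul, sum_const, card_univ,
      Fintype.card_perm, Fintype.card_fin, nsmul_eq_mul]
  · simp [hm]
end

section
/- Let m, n be natural numbers and let x : Fin m → ℂ and y : Fin n → ℂ satisfy ‖x_i‖ < 1 for all i and ‖y_j‖ < 1 for all j. Then exp(Σ_{k=1}^∞ (Σ_{i} x_i^k)·(Σ_{j} y_j^k)/k) = ∏_{i,j} (1 − x_i·y_j)^{-1}, the series on the left being absolutely convergent and every factor 1 − x_i·y_j being nonzero. -/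
/-!
Expanding `(∑ i, x i ^ k) * (∑ j, y j ^ k)` as `∑ i, ∑ j, (x i * y j) ^ k` turns the series into
a finite sum of the logarithmic series `∑ z ^ k / k = -log (1 - z)` at `z = x i * y j`, which lies
in the unit disc; exponentiating turns this finite sum of logarithms into the product.
-/

open Complex

lemma Complex.one_sub_ne_zero_of_norm_lt_one {z : ℂ} (hz : ‖z‖ < 1) : 1 - z ≠ 0 :=
  sub_ne_zero.mpr fun h => by simp [← h] at hz

lemma Complex.norm_mul_lt_one {a b : ℂ} (ha : ‖a‖ < 1) (hb : ‖b‖ < 1) : ‖a * b‖ < 1 := by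
  rw [norm_mul]
  exact mul_lt_one_of_nonneg_of_lt_one_left (norm_nonneg a) ha hb.le

lemma Complex.hasSum_sum_pow_mul_sum_pow_div {ι κ : Type*} [Fintype ι] [Fintype κ]
    {x : ι → ℂ} {y : κ → ℂ} (hx : ∀ i, ‖x i‖ < 1) (hy : ∀ j, ‖y j‖ < 1) :
    HasSum (fun k : ℕ => (∑ i, x i ^ (k + 1)) * (∑ j, y j ^ (k + 1)) / ((k : ℂ) + 1))
      (∑ i, ∑ j, -log (1 - x i * y j)) := by
  have hexpand : ∀ k : ℕ, (∑ i, x i ^ (k + 1)) * (∑ j, y j ^ (k + 1)) / ((k : ℂ) + 1)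
      = ∑ i, ∑ j, (x i * y j) ^ (k + 1) / ((k : ℂ) + 1) := fun k => by
    simp only [Finset.sum_mul_sum, Finset.sum_div, mul_pow]
  simp only [hexpand]
  exact hasSum_sum fun i _ => hasSum_sum fun j _ =>
    hasSum_taylorSeries_neg_log' (norm_mul_lt_one (hx i) (hy j))

/-- For tuples `x : Fin m → ℂ`, `y : Fin n → ℂ` of numbers of norm `< 1`,
`exp(∑_{k=1}^∞ (∑_i x_i^k)·(∑_j y_j^k)/k) = ∏_{i,j} (1 − x_i·y_j)⁻¹`, the series converging
absolutely and every factor `1 − x_i·y_j` being nonzero. -/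
theorem stmt13 (m n : ℕ) (x : Fin m → ℂ) (y : Fin n → ℂ)
    (hx : ∀ i, ‖x i‖ < 1) (hy : ∀ j, ‖y j‖ < 1) :
    (Summable fun k : ℕ =>
      ‖(∑ i, x i ^ (k + 1)) * (∑ j, y j ^ (k + 1)) / ((k : ℂ) + 1)‖) ∧
    (∀ i j, 1 - x i * y j ≠ 0) ∧
    (Complex.exp (∑' k : ℕ, (∑ i, x i ^ (k + 1)) * (∑ j, y j ^ (k + 1)) / ((k : ℂ) + 1))
      = ∏ i, ∏ j, (1 - x i * y j)⁻¹) := by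
  have hne : ∀ i j, 1 - x i * y j ≠ 0 := fun i j =>
    one_sub_ne_zero_of_norm_lt_one (norm_mul_lt_one (hx i) (hy j))
  have hsum := hasSum_sum_pow_mul_sum_pow_div hx hy
  -- `Summable` means unconditional convergence, which in finite dimension is absolute convergence
  refine ⟨summable_norm_iff.mpr hsum.summable, hne, ?_⟩
  simp only [hsum.tsum_eq, exp_sum, exp_neg, exp_log (hne _ _)]
end

section
/- Let L and M be positive integers. In the polynomial ring ℚ[X_1,…,X_M], define h_d for an integer d to be the complete homogeneous symmetric polynomial of degree d in X_1,…,X_M (the sum of all monomials of total degree d) when d ≥ 0, and h_d := 0 when d < 0. Then the determinant of the M×M matrix whose (a,b) entry (for a,b ∈ {1,…,M}) is h_{L+b−a} equals (X_1·X_2⋯X_M)^L. -/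
/-!
Let `H_L` be the matrix `(h_{L+b-a})`. Multiplying `H_L` on the right by the companion matrix
`C` of `∏ i, (t - X_i)` shifts its columns to the left and fills the last one with
`∑_{k ≥ 1} (-1)^(k-1) e_k h_{d-k}`, which is `h_d` for `d ≥ 1`; hence `H_L * C = H_{L+1}`.
As `H_0` is unitriangular and `det C = e_M = X_1⋯X_M`, we get `det H_L = (X_1⋯X_M)^L`.
The recurrence is `∑_k (-1)^k e_k h_{n-k} = 0` for `n ≥ 1`: expanding the products, the terms are
indexed by pairs (finset, multiset) of total size `n`, and moving a chosen variable of the pair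
from one side to the other is a sign-reversing involution.
-/

namespace MvPolynomial

open Finset

section Toggle

variable {σ : Type*}

noncomputable def pivot (m : Multiset σ) (h : m ≠ 0) : σ :=
  (Multiset.exists_mem_of_ne_zero h).choose

theorem pivot_mem {m : Multiset σ} (h : m ≠ 0) : pivot m h ∈ m :=
  (Multiset.exists_mem_of_ne_zero h).choose_spec

variable [DecidableEq σ]

def togglePair (a : σ) (p : Finset σ × Multiset σ) : Finset σ × Multiset σ :=
  if a ∈ p.1 then (p.1.erase a, a ::ₘ p.2) else (insert a p.1, p.2.erase a)

theorem togglePair_ne_self (a : σ) (p : Finset σ × Multiset σ) : togglePair a p ≠ p := by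
  unfold togglePair
  split_ifs with ha <;> intro h <;> have h1 := congrArg (a ∈ ·.1) h <;> simp_all

theorem neg_one_pow_card_togglePair {R : Type*} [Ring R] (a : σ) (p : Finset σ × Multiset σ) :
    (-1 : R) ^ (togglePair a p).1.card = -(-1) ^ p.1.card := by
  unfold togglePair
  split_ifs with ha
  · rw [← card_erase_add_one ha, pow_succ]; simp
  · rw [card_insert_of_notMem ha, pow_succ]; simp

variable {a : σ} {p : Finset σ × Multiset σ}

theorem togglePair_fst_val_add_snd (ha : a ∈ p.1.val + p.2) :
    (togglePair a p).1.val + (togglePair a p).2 = p.1.val + p.2 := by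
  unfold togglePair
  split_ifs with h
  · rw [Multiset.add_cons, erase_val, ← Multiset.cons_add, Multiset.cons_erase h]
  · have h2 : a ∈ p.2 := by simpa [h] using ha
    rw [insert_val_of_notMem h, Multiset.cons_add, ← Multiset.add_cons,
      Multiset.cons_erase h2]

theorem togglePair_togglePair (ha : a ∈ p.1.val + p.2) : togglePair a (togglePair a p) = p := by
  unfold togglePair
  by_cases h : a ∈ p.1
  · simp [h, insert_erase]
  · have h2 : a ∈ p.2 := by simpa [h] using ha
    simp [h, Multiset.cons_erase h2]

/-- The pivot depends only on the combined multiset, which `togglePair` preserves; this is what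
makes `flipPair` an involution. -/
noncomputable def flipPair (p : Finset σ × Multiset σ) : Finset σ × Multiset σ :=
  if h : p.1.val + p.2 = 0 then p else togglePair (pivot _ h) p

theorem flipPair_fst_val_add_snd (p : Finset σ × Multiset σ) :
    (flipPair p).1.val + (flipPair p).2 = p.1.val + p.2 := by
  unfold flipPair
  split_ifs with h
  · rfl
  · exact togglePair_fst_val_add_snd (pivot_mem h)

theorem flipPair_of_fst_val_add_snd_eq {p q : Finset σ × Multiset σ} (h : p.1.val + p.2 ≠ 0)
    (hq : q.1.val + q.2 = p.1.val + p.2) : flipPair q = togglePair (pivot _ h) q := by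
  unfold flipPair
  rw [dif_neg (hq ▸ h)]
  simp only [hq]

theorem flipPair_flipPair (p : Finset σ × Multiset σ) : flipPair (flipPair p) = p := by
  by_cases h : p.1.val + p.2 = 0
  · simp only [flipPair, dif_pos h]
  · rw [flipPair_of_fst_val_add_snd_eq h (flipPair_fst_val_add_snd p),
      flipPair_of_fst_val_add_snd_eq h rfl,
      togglePair_togglePair (pivot_mem h)]

end Toggle

section CompleteHomogeneous

variable (σ : Type*) [Fintype σ] (R : Type*) [CommRing R]

theorem esymm_eq_zero_of_card_lt {k : ℕ} (h : Fintype.card σ < k) : esymm σ R k = 0 := by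
  rw [esymm, powersetCard_eq_empty.2 (by simpa using h), sum_empty]

theorem esymm_card : esymm σ R (Fintype.card σ) = ∏ i, X i := by
  rw [esymm, ← card_univ, powersetCard_self, sum_singleton]

variable [DecidableEq σ]

noncomputable def pairsOfCard (n : ℕ) : Finset (Finset σ × Multiset σ) :=
  (range (n + 1)).biUnion fun k =>
    powersetCard k univ ×ˢ (univ : Finset (Sym σ (n - k))).map ⟨(↑), Sym.coe_injective⟩

variable {σ} in
theorem mem_pairsOfCard {n : ℕ} {p : Finset σ × Multiset σ} :
    p ∈ pairsOfCard σ n ↔ Multiset.card (p.1.val + p.2) = n := by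
  simp only [pairsOfCard, mem_biUnion, mem_range, mem_product, mem_powersetCard, mem_map,
    mem_univ, true_and, subset_univ, Multiset.card_add, card_val]
  constructor
  · rintro ⟨k, hk, rfl, s, hs⟩
    simp only [← hs, Function.Embedding.coeFn_mk, Sym.card_coe]
    omega
  · intro h
    exact ⟨p.1.card, by omega, rfl, ⟨p.2, by omega⟩, rfl⟩

theorem sum_esymm_mul_hsymm_eq_sum_pairsOfCard (n : ℕ) :
    ∑ k ∈ range (n + 1), (-1 : MvPolynomial σ R) ^ k * esymm σ R k * hsymm σ R (n - k) =
      ∑ p ∈ pairsOfCard σ n, (-1) ^ p.1.card * ((p.1.val + p.2).map X).prod := by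
  rw [pairsOfCard, sum_biUnion]
  · refine sum_congr rfl fun k _ => ?_
    rw [sum_product, esymm, hsymm, mul_assoc, sum_mul_sum, mul_sum]
    refine sum_congr rfl fun t ht => ?_
    rw [sum_map, mul_sum]
    refine sum_congr rfl fun u _ => ?_
    simp [(mem_powersetCard.mp ht).2, Multiset.prod_add]
  · intro k _ l _ hkl
    refine disjoint_left.mpr fun p hk hl => hkl ?_
    rw [mem_product, mem_powersetCard] at hk hl
    rw [← hk.1.2, ← hl.1.2]

theorem sum_esymm_mul_hsymm_eq_zero {n : ℕ} (hn : n ≠ 0) :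
    ∑ k ∈ range (n + 1), (-1 : MvPolynomial σ R) ^ k * esymm σ R k * hsymm σ R (n - k) = 0 := by
  rw [sum_esymm_mul_hsymm_eq_sum_pairsOfCard]
  have hne : ∀ p ∈ pairsOfCard σ n, p.1.val + p.2 ≠ 0 := fun p hp h =>
    hn (by rw [← mem_pairsOfCard.mp hp, h, Multiset.card_zero])
  refine sum_involution (fun p _ => flipPair p) (fun p hp => ?_) (fun p hp _ => ?_)
    (fun p hp => ?_) (fun p _ => flipPair_flipPair p)
  · rw [flipPair_of_fst_val_add_snd_eq (hne p hp) rfl,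
      togglePair_fst_val_add_snd (pivot_mem (hne p hp)),
      neg_one_pow_card_togglePair]
    ring
  · rw [flipPair_of_fst_val_add_snd_eq (hne p hp) rfl]
    exact togglePair_ne_self _ _
  · rwa [mem_pairsOfCard, flipPair_fst_val_add_snd, ← mem_pairsOfCard]

noncomputable def hsymmInt (d : ℤ) : MvPolynomial σ R :=
  if d < 0 then 0 else hsymm σ R d.toNat

variable {R}

theorem hsymmInt_natCast (n : ℕ) : hsymmInt σ R n = hsymm σ R n := by
  simp [hsymmInt]

theorem hsymmInt_of_neg {d : ℤ} (hd : d < 0) : hsymmInt σ R d = 0 := if_pos hd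

theorem hsymmInt_eq_sum {d : ℤ} (hd : 0 < d) :
    hsymmInt σ R d = ∑ k ∈ range (Fintype.card σ),
      (-1) ^ k * esymm σ R (k + 1) * hsymmInt σ R (d - (k + 1)) := by
  lift d to ℕ using hd.le with n
  set f : ℕ → MvPolynomial σ R := fun k => (-1) ^ k * esymm σ R k * hsymmInt σ R (n - k)
  have hcard : ∀ k ≥ Fintype.card σ + 1, f k = 0 := fun k hk => by
    simp only [f, esymm_eq_zero_of_card_lt σ R (by omega : Fintype.card σ < k), mul_zero, zero_mul]
  have hdeg : ∀ k ≥ n + 1, f k = 0 := fun k hk => by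
    simp only [f, hsymmInt_of_neg σ (by omega : (n : ℤ) - k < 0), mul_zero]
  have hrec : ∑ k ∈ range (Fintype.card σ + 1), f k = 0 := by
    rw [← eventually_constant_sum hcard (Nat.le_add_right _ n),
      Nat.add_right_comm, eventually_constant_sum hdeg (by omega)]
    refine (sum_congr rfl fun k hk => ?_).trans
      (sum_esymm_mul_hsymm_eq_zero σ R (n := n) (by omega))
    rw [mem_range] at hk
    simp only [f, ← hsymmInt_natCast σ (n - k), Nat.cast_sub (Nat.lt_succ_iff.mp hk)]
  rw [sum_range_succ', add_eq_zero_iff_eq_neg'] at hrec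
  have hf0 : f 0 = hsymmInt σ R n := by simp [f]
  rw [← hf0, hrec, ← sum_neg_distrib]
  refine sum_congr rfl fun k _ => ?_
  simp only [f, pow_succ, Nat.cast_succ]
  ring

end CompleteHomogeneous

section RectangularJacobiTrudi

open Matrix

variable (R : Type*) [CommRing R] (M : ℕ)

noncomputable def rectHsymmMatrix (L : ℕ) : Matrix (Fin M) (Fin M) (MvPolynomial (Fin M) R) :=
  of fun a b => hsymmInt (Fin M) R (L + b - a)

noncomputable def esymmCompanion : Matrix (Fin M) (Fin M) (MvPolynomial (Fin M) R) :=
  of fun c b =>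
    if (b : ℕ) + 1 = M then (-1) ^ (M - 1 - c : ℕ) * esymm (Fin M) R (M - c)
    else if (c : ℕ) = b + 1 then 1 else 0

theorem rectHsymmMatrix_mul_esymmCompanion (L : ℕ) :
    rectHsymmMatrix R M L * esymmCompanion R M = rectHsymmMatrix R M (L + 1) := by
  ext a b : 1
  simp only [mul_apply, rectHsymmMatrix, esymmCompanion, of_apply]
  by_cases hb : (b : ℕ) + 1 = M
  · simp only [hb, if_true]
    rw [hsymmInt_eq_sum (Fin M) (by omega), Fintype.card_fin,
      Fin.sum_univ_eq_sum_range (fun c => hsymmInt (Fin M) R (L + c - a) *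
        ((-1) ^ (M - 1 - c) * esymm (Fin M) R (M - c))), ← sum_range_reflect]
    refine sum_congr rfl fun k hk => ?_
    rw [mem_range] at hk
    have h1 : M - 1 - (M - 1 - k) = k := by omega
    have h2 : M - (M - 1 - k) = k + 1 := by omega
    have h3 : (L : ℤ) + (M - 1 - k : ℕ) - a = (L + 1 : ℕ) + b - a - (k + 1) := by
      push_cast; omega
    rw [h1, h2, h3]
    ring
  · simp only [hb, if_false]
    rw [sum_eq_single ⟨b + 1, by omega⟩]
    · simp only [if_true, mul_one]
      congr 1
      push_cast
      ring
    · intro c _ hc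
      rw [if_neg (fun h => hc (Fin.ext h)), mul_zero]
    · simp

theorem det_esymmCompanion : (esymmCompanion R M).det = ∏ i, X i := by
  cases M with
  | zero => simp
  | succ m =>
    have hsub : (esymmCompanion R (m + 1)).submatrix Fin.succ (Fin.last m).succAbove = 1 := by
      ext i j : 1
      simp only [submatrix_apply, Fin.succAbove_last, esymmCompanion, of_apply, Fin.val_succ,
        Fin.val_castSucc, one_apply, Fin.ext_iff]
      rw [if_neg (by omega)]
      simp
    rw [det_succ_row_zero, sum_eq_single (Fin.last m)]
    · rw [hsub, det_one, mul_one]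
      simp only [esymmCompanion, of_apply, Fin.val_last, Fin.val_zero, if_pos, Nat.sub_zero,
        Nat.add_sub_cancel, ← mul_assoc, ← pow_add, Even.neg_one_pow ⟨m, rfl⟩, one_mul]
      simpa using esymm_card (Fin (m + 1)) R
    · intro j _ hj
      have : (j : ℕ) ≠ m := fun h => hj (Fin.ext h)
      simp [esymmCompanion, this]
    · simp

theorem det_rectHsymmMatrix_zero : (rectHsymmMatrix R M 0).det = 1 := by
  have : (rectHsymmMatrix R M 0).IsUpperTriangular := fun i j (hij : j < i) =>
    hsymmInt_of_neg (Fin M) (by simp; omega)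
  rw [det_of_isUpperTriangular this]
  simp [rectHsymmMatrix, hsymmInt]

theorem det_rectHsymmMatrix (L : ℕ) : (rectHsymmMatrix R M L).det = (∏ i, X i) ^ L := by
  induction L with
  | zero => rw [det_rectHsymmMatrix_zero, pow_zero]
  | succ L ih =>
    rw [← rectHsymmMatrix_mul_esymmCompanion, det_mul, ih, det_esymmCompanion, pow_succ]

end RectangularJacobiTrudi

end MvPolynomial

theorem stmt14_general (L M : ℕ) :
    Matrix.det (Matrix.of fun a b : Fin M =>
      if ((L : ℤ) + (b : ℤ) - (a : ℤ)) < 0 then (0 : MvPolynomial (Fin M) ℚ)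
      else MvPolynomial.hsymm (Fin M) ℚ ((L : ℤ) + (b : ℤ) - (a : ℤ)).toNat)
    = (∏ i, MvPolynomial.X i) ^ L :=
  MvPolynomial.det_rectHsymmMatrix ℚ M L

/-- Jacobi–Trudi for a rectangle: In `ℚ[X_1,…,X_M]`, with `h_d` the complete
homogeneous symmetric polynomial of degree `d` for `d ≥ 0` and `h_d = 0` for `d < 0`, the
determinant of the `M×M` matrix with `(a,b)` entry `h_{L+b−a}` equals `(X_1⋯X_M)^L`. -/
theorem stmt14 (L M : ℕ) (hL : 0 < L) (hM : 0 < M) :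
    Matrix.det (Matrix.of fun a b : Fin M =>
      if ((L : ℤ) + (b : ℤ) - (a : ℤ)) < 0 then (0 : MvPolynomial (Fin M) ℚ)
      else MvPolynomial.hsymm (Fin M) ℚ ((L : ℤ) + (b : ℤ) - (a : ℤ)).toNat)
    = (∏ i, MvPolynomial.X i) ^ L :=
  stmt14_general L M
end
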